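/- arXiv:2305.11743 — 2 statements merged into one kernel-verified Lean document; each statement's English description precedes it below -/
import Mathlib

section
/- Let n_1, n_2, n_3 be positive integers with gcd(n_1,n_2,n_3) = 1. For each pair i < j let C_{ij} ∈ Ker_Z(n_1,n_2,n_3) denote the circuit supported on {i,j} (the vector with (n_j/gcd(n_i,n_j)) in position i, -(n_i/gcd(n_i,n_j)) in position j, and 0 elsewhere). Then at least two of the three circuits C_{12}, C_{13}, C_{23} admit a proper semiconformal decomposition into nonzero elements of Ker_Z(n_1,n_2,n_3) (equivalently, at least two of them are not indispensable). -/
/-- Membership in `Ker_Z(n_1,n_2,n_3)`. -/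
def InKer (n1 n2 n3 : ℕ) (u : Fin 3 → ℤ) : Prop :=
  u 0 * (n1 : ℤ) + u 1 * (n2 : ℤ) + u 2 * (n3 : ℤ) = 0

/-- Semiconformality of a decomposition `v + w`. -/
def SemiConf (v w : Fin 3 → ℤ) : Prop :=
  ∀ l, (0 < v l → 0 ≤ w l) ∧ (w l < 0 → v l ≤ 0)

/-- `u` admits a proper semiconformal decomposition into nonzero kernel elements. -/
def NotIndisp (n1 n2 n3 : ℕ) (u : Fin 3 → ℤ) : Prop :=
  ∃ v w : Fin 3 → ℤ, InKer n1 n2 n3 v ∧ InKer n1 n2 n3 w ∧ v ≠ 0 ∧ w ≠ 0 ∧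
    u = v + w ∧ SemiConf v w

lemma aux_div_mul (m n : ℕ) (hm : 0 < m) :
    ((n / Nat.gcd m n : ℕ) : ℤ) * m = ((m / Nat.gcd m n : ℕ) : ℤ) * n := by
  set g := Nat.gcd m n with hgdef
  obtain ⟨a, ha⟩ : g ∣ m := Nat.gcd_dvd_left m n
  obtain ⟨b, hb⟩ : g ∣ n := Nat.gcd_dvd_right m n
  have hg : 0 < g := Nat.gcd_pos_of_pos_left n hm
  have h1 : n / g = b := by rw [hb, Nat.mul_div_cancel_left _ hg]
  have h2 : m / g = a := by rw [ha, Nat.mul_div_cancel_left _ hg]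
  rw [h1, h2]
  have hmn : m * b = n * a := by rw [ha, hb]; ring
  have := congrArg (fun k : ℕ => (k : ℤ)) hmn
  push_cast at this; linarith

lemma aux_div_pos (m n : ℕ) (hm : 0 < m) (hn : 0 < n) :
    0 < ((n / Nat.gcd m n : ℕ) : ℤ) := by
  have hg : 0 < Nat.gcd m n := Nat.gcd_pos_of_pos_left n hm
  have : 0 < n / Nat.gcd m n :=
    Nat.div_pos (Nat.le_of_dvd hn (Nat.gcd_dvd_right m n)) hg
  exact_mod_cast this

/-- At least two of the three circuits of `(n_1, n_2, n_3)` are not indispensable. -/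
theorem stmt9 (n1 n2 n3 : ℕ) (h1 : 0 < n1) (h2 : 0 < n2) (h3 : 0 < n3)
    (hg : Nat.gcd n1 (Nat.gcd n2 n3) = 1) :
    (NotIndisp n1 n2 n3 ![((n2 / Nat.gcd n1 n2 : ℕ) : ℤ), -((n1 / Nat.gcd n1 n2 : ℕ) : ℤ), 0] ∧
     NotIndisp n1 n2 n3 ![((n3 / Nat.gcd n1 n3 : ℕ) : ℤ), 0, -((n1 / Nat.gcd n1 n3 : ℕ) : ℤ)]) ∨
    (NotIndisp n1 n2 n3 ![((n2 / Nat.gcd n1 n2 : ℕ) : ℤ), -((n1 / Nat.gcd n1 n2 : ℕ) : ℤ), 0] ∧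
     NotIndisp n1 n2 n3 ![0, ((n3 / Nat.gcd n2 n3 : ℕ) : ℤ), -((n2 / Nat.gcd n2 n3 : ℕ) : ℤ)]) ∨
    (NotIndisp n1 n2 n3 ![((n3 / Nat.gcd n1 n3 : ℕ) : ℤ), 0, -((n1 / Nat.gcd n1 n3 : ℕ) : ℤ)] ∧
     NotIndisp n1 n2 n3 ![0, ((n3 / Nat.gcd n2 n3 : ℕ) : ℤ), -((n2 / Nat.gcd n2 n3 : ℕ) : ℤ)]) := by
  set A : ℤ := ((n2 / Nat.gcd n1 n2 : ℕ) : ℤ) with hAdef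
  set B : ℤ := ((n1 / Nat.gcd n1 n2 : ℕ) : ℤ) with hBdef
  set C : ℤ := ((n3 / Nat.gcd n1 n3 : ℕ) : ℤ) with hCdef
  set D : ℤ := ((n1 / Nat.gcd n1 n3 : ℕ) : ℤ) with hDdef
  set E : ℤ := ((n3 / Nat.gcd n2 n3 : ℕ) : ℤ) with hEdef
  set F : ℤ := ((n2 / Nat.gcd n2 n3 : ℕ) : ℤ) with hFdef
  have hA : 0 < A := aux_div_pos n1 n2 h1 h2
  have hB : 0 < B := by
    rw [hBdef, Nat.gcd_comm]; exact aux_div_pos n2 n1 h2 h1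
  have hC : 0 < C := aux_div_pos n1 n3 h1 h3
  have hD : 0 < D := by
    rw [hDdef, Nat.gcd_comm]; exact aux_div_pos n3 n1 h3 h1
  have hE : 0 < E := aux_div_pos n2 n3 h2 h3
  have hF : 0 < F := by
    rw [hFdef, Nat.gcd_comm]; exact aux_div_pos n3 n2 h3 h2
  have k12 : A * n1 = B * n2 := aux_div_mul n1 n2 h1
  have k13 : C * n1 = D * n3 := aux_div_mul n1 n3 h1
  have k23 : E * n2 = F * n3 := aux_div_mul n2 n3 h2
  have ne0 : ∀ (v : Fin 3 → ℤ) (i : Fin 3), v i ≠ 0 → v ≠ 0 := by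
    intro v i hvi hv
    exact hvi (by rw [hv]; rfl)
  -- P ∨ Q
  have pq : NotIndisp n1 n2 n3 ![A, -B, 0] ∨ NotIndisp n1 n2 n3 ![C, 0, -D] := by
    rcases le_or_gt C A with h | h
    · left
      refine ⟨![C, 0, -D], ![A - C, -B, D], ?_, ?_, ?_, ?_, ?_, ?_⟩
      · simp [InKer]; linarith
      · simp [InKer]; linarith
      · exact ne0 _ 0 (by simp; omega)
      · exact ne0 _ 1 (by simp; omega)
      · funext i; fin_cases i <;> simp <;> ring
      · intro l; fin_cases l <;> simp <;> omega
    · right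
      refine ⟨![A, -B, 0], ![C - A, B, -D], ?_, ?_, ?_, ?_, ?_, ?_⟩
      · simp [InKer]; linarith
      · simp [InKer]; linarith
      · exact ne0 _ 0 (by simp; omega)
      · exact ne0 _ 0 (by simp; omega)
      · funext i; fin_cases i <;> simp <;> ring
      · intro l; fin_cases l <;> simp <;> omega
  have pr : NotIndisp n1 n2 n3 ![A, -B, 0] ∨ NotIndisp n1 n2 n3 ![0, E, -F] := by
    rcases le_or_gt E B with h | h
    · left
      refine ⟨![A, E - B, -F], ![0, -E, F], ?_, ?_, ?_, ?_, ?_, ?_⟩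
      · simp [InKer]; linarith
      · simp [InKer]; linarith
      · exact ne0 _ 0 (by simp; omega)
      · exact ne0 _ 1 (by simp; omega)
      · funext i; fin_cases i <;> simp <;> ring
      · intro l; fin_cases l <;> simp <;> omega
    · right
      refine ⟨![-A, B, 0], ![A, E - B, -F], ?_, ?_, ?_, ?_, ?_, ?_⟩
      · simp [InKer]; linarith
      · simp [InKer]; linarith
      · exact ne0 _ 0 (by simp; omega)
      · exact ne0 _ 0 (by simp; omega)
      · funext i; fin_cases i <;> simp <;> ring
      · intro l; fin_cases l <;> simp <;> omega
  have qr : NotIndisp n1 n2 n3 ![C, 0, -D] ∨ NotIndisp n1 n2 n3 ![0, E, -F] := by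
    rcases le_or_gt F D with h | h
    · left
      refine ⟨![C, -E, F - D], ![0, E, -F], ?_, ?_, ?_, ?_, ?_, ?_⟩
      · simp [InKer]; linarith
      · simp [InKer]; linarith
      · exact ne0 _ 0 (by simp; omega)
      · exact ne0 _ 1 (by simp; omega)
      · funext i; fin_cases i <;> simp <;> ring
      · intro l; fin_cases l <;> simp <;> omega
    · right
      refine ⟨![-C, E, D - F], ![C, 0, -D], ?_, ?_, ?_, ?_, ?_, ?_⟩
      · simp [InKer]; linarith
      · simp [InKer]; linarith
      · exact ne0 _ 1 (by simp; omega)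
      · exact ne0 _ 0 (by simp; omega)
      · funext i; fin_cases i <;> simp <;> ring
      · intro l; fin_cases l <;> simp <;> omega
  tauto
end

section
/- Let n_1, n_2, n_3 be positive integers with gcd(n_1,n_2,n_3)=1 that form a complete intersection on n_1, i.e., with c_l the least positive integer such that c_l·n_l lies in the semigroup generated by the other two, one has c_2·n_2 = c_3·n_3 ≠ c_1·n_1. Suppose u = (a, b, -c) ∈ Ker_Z(n_1,n_2,n_3) with a, b, c positive integers, b ≥ n_3/gcd(n_2,n_3), and c ≥ n_2/gcd(n_2,n_3). Then u admits a proper conformal decomposition in Ker_Z(n_1,n_2,n_3), namely u = (a, b - n_3^#, -c + n_2^#) + (0, n_3^#, -n_2^#) where n_3^# = n_3/gcd(n_2,n_3) and n_2^# = n_2/gcd(n_2,n_3); in particular u is not in the Graver basis of Ker_Z(n_1,n_2,n_3). -/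
/-- Conformality of a decomposition `x = y + z`. -/
def Conf (x y z : Fin 3 → ℤ) : Prop :=
  x = y + z ∧ ∀ l, max (x l) 0 = max (y l) 0 + max (z l) 0 ∧
    max (-(x l)) 0 = max (-(y l)) 0 + max (-(z l)) 0

/-- Membership in the numerical semigroup generated by `a` and `b`. -/
def InSg (a b x : ℕ) : Prop := ∃ p q : ℕ, x = p * a + q * b

/-- `c` is the least positive integer such that `c·m ∈ ⟨a, b⟩`. -/
def IsLeastC (a b m c : ℕ) : Prop :=
  0 < c ∧ InSg a b (c * m) ∧ ∀ c', 0 < c' → InSg a b (c' * m) → c ≤ c'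

/-- If `(n_1,n_2,n_3)` is a complete intersection on `n_1` and `u = (a, b, -c)` is a
kernel element with `b ≥ n_3^#` and `c ≥ n_2^#`, then `u` decomposes properly and
conformally as `(a, b - n_3^#, -c + n_2^#) + (0, n_3^#, -n_2^#)`; in particular `u` is
not a Graver element. -/
theorem stmt14 (n1 n2 n3 c1 c2 c3 : ℕ)
    (h1 : 0 < n1) (h2 : 0 < n2) (h3 : 0 < n3)
    (hg : Nat.gcd n1 (Nat.gcd n2 n3) = 1)
    (hc1 : IsLeastC n2 n3 n1 c1)
    (hc2 : IsLeastC n1 n3 n2 c2)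
    (hc3 : IsLeastC n1 n2 n3 c3)
    (hCI : c2 * n2 = c3 * n3 ∧ c2 * n2 ≠ c1 * n1)
    (a b c : ℤ) (ha : 0 < a) (hb : 0 < b) (hc : 0 < c)
    (hker : InKer n1 n2 n3 ![a, b, -c])
    (hbge : ((n3 / Nat.gcd n2 n3 : ℕ) : ℤ) ≤ b)
    (hcge : ((n2 / Nat.gcd n2 n3 : ℕ) : ℤ) ≤ c) :
    InKer n1 n2 n3 ![a, b - ((n3 / Nat.gcd n2 n3 : ℕ) : ℤ), -c + ((n2 / Nat.gcd n2 n3 : ℕ) : ℤ)] ∧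
    InKer n1 n2 n3 ![0, ((n3 / Nat.gcd n2 n3 : ℕ) : ℤ), -((n2 / Nat.gcd n2 n3 : ℕ) : ℤ)] ∧
    (![a, b - ((n3 / Nat.gcd n2 n3 : ℕ) : ℤ), -c + ((n2 / Nat.gcd n2 n3 : ℕ) : ℤ)] : Fin 3 → ℤ) ≠ 0 ∧
    (![0, ((n3 / Nat.gcd n2 n3 : ℕ) : ℤ), -((n2 / Nat.gcd n2 n3 : ℕ) : ℤ)] : Fin 3 → ℤ) ≠ 0 ∧
    Conf ![a, b, -c]
      ![a, b - ((n3 / Nat.gcd n2 n3 : ℕ) : ℤ), -c + ((n2 / Nat.gcd n2 n3 : ℕ) : ℤ)]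
      ![0, ((n3 / Nat.gcd n2 n3 : ℕ) : ℤ), -((n2 / Nat.gcd n2 n3 : ℕ) : ℤ)] ∧
    (∃ v w : Fin 3 → ℤ, InKer n1 n2 n3 v ∧ InKer n1 n2 n3 w ∧ v ≠ 0 ∧ w ≠ 0 ∧
      Conf ![a, b, -c] v w) := by

  set g := Nat.gcd n2 n3 with hgdef
  have hgpos : 0 < g := Nat.gcd_pos_of_pos_left n3 h2
  obtain ⟨n2', h2'⟩ := (Nat.gcd_dvd_left n2 n3 : g ∣ n2)
  obtain ⟨n3', h3'⟩ := (Nat.gcd_dvd_right n2 n3 : g ∣ n3)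
  have e2 : n2 / g = n2' := by
    conv_lhs => rw [h2', Nat.mul_div_cancel_left _ hgpos]
  have e3 : n3 / g = n3' := by
    conv_lhs => rw [h3', Nat.mul_div_cancel_left _ hgpos]
  have key : (n3' : ℤ) * n2 = (n2' : ℤ) * n3 := by
    have : n3' * n2 = n2' * n3 := by
      conv_lhs => rw [h2']
      conv_rhs => rw [h3']
      ring
    exact_mod_cast this
  have h3pos : 0 < n3' := by
    rcases Nat.eq_zero_or_pos n3' with h | h
    · subst h; simp at h3'; omega
    · exact h
  have h2pos : 0 < n2' := by
    rcases Nat.eq_zero_or_pos n2' with h | h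
    · subst h; simp at h2'; omega
    · exact h
  simp only [InKer, Matrix.cons_val_zero, Matrix.cons_val_one, Matrix.head_cons,
    Matrix.cons_val_two, Matrix.tail_cons, e2, e3] at hker ⊢
  simp only [e2, e3] at hbge hcge
  refine ⟨by linarith [key], by linarith [key], ?_, ?_, ?_, ?_⟩
  · intro h
    have := congrFun h 0
    simp at this
    omega
  · intro h
    have := congrFun h 1
    simp at this
    omega
  · refine ⟨?_, ?_⟩
    · funext l
      fin_cases l <;> simp <;> ring
    · intro l
      fin_cases l <;> simp <;> constructor <;> omega
  · refine ⟨![a, b - (n3' : ℤ), -c + (n2' : ℤ)], ![0, (n3' : ℤ), -(n2' : ℤ)],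
      ?_, ?_, ?_, ?_, ?_, ?_⟩
    · simp only [InKer, Matrix.cons_val_zero, Matrix.cons_val_one, Matrix.head_cons,
        Matrix.cons_val_two, Matrix.tail_cons]
      linarith [key]
    · simp only [InKer, Matrix.cons_val_zero, Matrix.cons_val_one, Matrix.head_cons,
        Matrix.cons_val_two, Matrix.tail_cons]
      linarith [key]
    · intro h
      have := congrFun h 0
      simp at this
      omega
    · intro h
      have := congrFun h 1
      simp at this
      omega
    · funext l
      fin_cases l <;> simp <;> ring
    · intro l
      fin_cases l <;> simp <;> constructor <;> omega
end
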